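/- Dyadic cube approximation of a very well shaped set: let m ≥ 1, let Ω ⊆ 𝕋_m be very well shaped with constant C, and fix γ ∈ 𝕋_m. For a positive integer k let C(k) be the set of cubes of the form ∏_{j=1}^m [γ_j + u_j/k, γ_j + (u_j+1)/k] (taken modulo 1, u ∈ ℤ^m) that are contained in Ω; let B_1 = C(2) and, for i ≥ 2, let B_i be the set of cubes in C(2^i) not contained in any cube of C(2^{i−1}). Then for every integer M ≥ 1, |μ(⋃_{i=1}^{M} ⋃_{Γ ∈ B_i} Γ) − μ(Ω)| ≤ c (μ(Ω)^{(m−1)/m} 2^{−M} + 2^{−Mm}), where c depends only on m and C. -/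

import Mathlib

open MeasureTheory

noncomputable section

abbrev Torus (m : ℕ) : Type := Fin m → AddCircle (1 : ℝ)

noncomputable def tmeas {m : ℕ} (Ω : Set (Torus m)) : ℝ := (volume Ω).toReal

noncomputable def torusDist {m : ℕ} (u w : Torus m) : ℝ :=
  Real.sqrt (∑ i, dist (u i) (w i) ^ 2)

noncomputable def torusDistSet {m : ℕ} (u : Torus m) (Ω : Set (Torus m)) : ℝ :=
  ⨅ w : Ω, torusDist u (w : Torus m)

def outerShell {m : ℕ} (Ω : Set (Torus m)) (ε : ℝ) : Set (Torus m) :=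
  {u | u ∉ Ω ∧ torusDistSet u Ω < ε}

def innerShell {m : ℕ} (Ω : Set (Torus m)) (ε : ℝ) : Set (Torus m) :=
  {u | u ∈ Ω ∧ torusDistSet u Ωᶜ < ε}

def IsWellShaped {m : ℕ} (Ω : Set (Torus m)) (C : ℝ) : Prop :=
  ∀ ε : ℝ, 0 < ε →
    tmeas (outerShell Ω ε) ≤ C * ε ∧ tmeas (innerShell Ω ε) ≤ C * ε

def IsVeryWellShaped {m : ℕ} (Ω : Set (Torus m)) (C : ℝ) : Prop :=
  ∀ ε : ℝ, 0 < ε →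
    tmeas (outerShell Ω ε) ≤ C * (tmeas Ω ^ (1 - 1 / (m : ℝ)) * ε + ε ^ m) ∧
    tmeas (innerShell Ω ε) ≤ C * (tmeas Ω ^ (1 - 1 / (m : ℝ)) * ε + ε ^ m)

noncomputable def discrepancy {ι : Type*} {n : ℕ} (s : Set ι) (ξ : ι → Fin n → ℝ) : ℝ :=
  if s.ncard = 0 then 1
  else
    ⨆ B : {B : (Fin n → ℝ) × (Fin n → ℝ) // ∀ j, 0 ≤ B.1 j ∧ B.1 j ≤ B.2 j ∧ B.2 j ≤ 1},
      |((s ∩ {k | ∀ j, B.val.1 j ≤ ξ k j ∧ ξ k j < B.val.2 j}).ncard : ℝ) / (s.ncard : ℝ)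
        - ∏ j, (B.val.2 j - B.val.1 j)|

noncomputable def torusPt (p : ℕ) {m : ℕ} (x : Fin m → Fin p) : Torus m :=
  fun i => ((((x i : ℕ) : ℝ) / (p : ℝ) : ℝ) : AddCircle (1 : ℝ))

noncomputable def fracPt {p m n : ℕ} (G : Fin n → MvPolynomial (Fin m) (ZMod p))
    (x : Fin m → ℤ) : Fin n → ℝ :=
  fun j => ((MvPolynomial.eval (fun i => ((x i : ℤ) : ZMod p)) (G j)).val : ℝ) / (p : ℝ)

def Degree2Independent {p m n : ℕ} (G : Fin n → MvPolynomial (Fin m) (ZMod p)) : Prop :=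
  ∀ a : Fin n → ZMod p, a ≠ 0 → 2 ≤ (∑ j, a j • G j).totalDegree

def torusIcc (a b : ℝ) : Set (AddCircle (1 : ℝ)) :=
  (fun r : ℝ => (r : AddCircle (1 : ℝ))) '' Set.Icc a b

def gridCube {m : ℕ} (γ : Fin m → ℝ) (k : ℕ) (u : Fin m → ℤ) : Set (Torus m) :=
  {t | ∀ i, t i ∈ torusIcc (γ i + (u i : ℝ) / k) (γ i + ((u i : ℝ) + 1) / k)}

def torusCube {m : ℕ} (γ : Fin m → ℝ) (s : ℝ) : Set (Torus m) :=
  {t | ∀ i, t i ∈ torusIcc (γ i) (γ i + s)}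

def cubesIn {m : ℕ} (Ω : Set (Torus m)) (γ : Fin m → ℝ) (k : ℕ) : Set (Set (Torus m)) :=
  {Γ | (∃ u : Fin m → ℤ, Γ = gridCube γ k u) ∧ Γ ⊆ Ω}

def dyadicB {m : ℕ} (Ω : Set (Torus m)) (γ : Fin m → ℝ) (i : ℕ) : Set (Set (Torus m)) :=
  if i = 1 then cubesIn Ω γ 2
  else {Γ | Γ ∈ cubesIn Ω γ (2 ^ i) ∧ ∀ Γ' ∈ cubesIn Ω γ (2 ^ (i - 1)), ¬ Γ ⊆ Γ'}

def polySolutions (p : ℕ) {m n : ℕ} (F : Fin n → MvPolynomial (Fin m) ℤ) :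
    Set (Fin m → Fin p) :=
  {x | ∀ j, ((MvPolynomial.eval (fun i => ((x i : ℕ) : ℤ)) (F j) : ℤ) : ZMod p) = 0}

noncomputable def Tcount (p : ℕ) {m n : ℕ} (F : Fin n → MvPolynomial (Fin m) ℤ)
    (S : Set (Torus m)) : ℕ :=
  (polySolutions p F ∩ {x | torusPt p x ∈ S}).ncard

end

/-!
Every cube of side `2⁻ᴹ` contained in `Ω` is covered by `B_1, …, B_M`: if it is not itself in
`B_M`, it lies in a cube of side `2⁻⁽ᴹ⁻¹⁾` contained in `Ω`, and so on down to `B_1`. So a point of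
`Ω` left uncovered lies in a cube of side `2⁻ᴹ` that meets the complement of `Ω`, hence at distance
at most `√m 2⁻ᴹ` from it. The union is thus squeezed between `Ω` minus an inner shell of width
`ε ≍ 2⁻ᴹ` and `Ω`, and the very-well-shaped bound on that shell is the claimed estimate.
-/

open Set

lemma AddCircle.dist_coe_le (s t : ℝ) :
    dist (s : AddCircle (1 : ℝ)) (t : AddCircle (1 : ℝ)) ≤ |s - t| := by
  rw [dist_eq_norm, ← AddCircle.coe_sub, ← Real.norm_eq_abs]
  exact QuotientAddGroup.norm_mk_le_norm

lemma torusDistSet_le_torusDist {m : ℕ} {S : Set (Torus m)} (x : Torus m) {y : Torus m}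
    (hy : y ∈ S) : torusDistSet x S ≤ torusDist x y :=
  ciInf_le ⟨0, by rintro _ ⟨w, rfl⟩; exact Real.sqrt_nonneg _⟩ (⟨y, hy⟩ : S)

section GridCube

variable {m : ℕ} {γ : Fin m → ℝ} {k : ℕ}

lemma exists_mem_gridCube (hk : 0 < k) (x : Torus m) : ∃ u : Fin m → ℤ, x ∈ gridCube γ k u := by
  have hk' : (0 : ℝ) < k := by exact_mod_cast hk
  suffices ∀ i, ∃ v : ℤ, x i ∈ torusIcc (γ i + v / k) (γ i + (v + 1) / k) by
    choose u hu using this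
    exact ⟨u, hu⟩
  intro i
  obtain ⟨r, hr⟩ := QuotientAddGroup.mk_surjective (x i)
  set y := (r - γ i) * k
  refine ⟨⌊y⌋, r, ⟨?_, ?_⟩, hr⟩
  · have : (⌊y⌋ : ℝ) / k ≤ r - γ i := by rw [div_le_iff₀ hk']; exact Int.floor_le y
    linarith
  · have : r - γ i ≤ (⌊y⌋ + 1) / k := by rw [le_div_iff₀ hk']; exact (Int.lt_floor_add_one y).le
    linarith

lemma torusDist_le_of_mem_gridCube (hk : 0 < k) {u : Fin m → ℤ} {x y : Torus m}
    (hx : x ∈ gridCube γ k u) (hy : y ∈ gridCube γ k u) : torusDist x y ≤ √m / k := by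
  have hk' : (0 : ℝ) < k := by exact_mod_cast hk
  have hcoord : ∀ i, dist (x i) (y i) ≤ 1 / k := by
    intro i
    obtain ⟨s, ⟨hs₁, hs₂⟩, hsx⟩ := hx i
    obtain ⟨t, ⟨ht₁, ht₂⟩, hty⟩ := hy i
    have hside : ((u i : ℝ) + 1) / k - (u i : ℝ) / k = 1 / k := by ring
    rw [← hsx, ← hty]
    refine (AddCircle.dist_coe_le s t).trans (abs_sub_le_iff.mpr ⟨?_, ?_⟩) <;> linarith
  calc torusDist x y ≤ √(∑ _i : Fin m, (1 / (k : ℝ)) ^ 2) :=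
        Real.sqrt_le_sqrt <| Finset.sum_le_sum fun i _ => pow_le_pow_left₀ dist_nonneg (hcoord i) 2
    _ = √m / k := by
        rw [Finset.sum_const, Finset.card_univ, Fintype.card_fin, nsmul_eq_mul,
          Real.sqrt_mul (Nat.cast_nonneg m), Real.sqrt_sq (by positivity), mul_one_div]

end GridCube

section Dyadic

variable {m : ℕ} {Ω : Set (Torus m)} {γ : Fin m → ℝ}

lemma subset_of_mem_dyadicB {i : ℕ} {Γ : Set (Torus m)} (hΓ : Γ ∈ dyadicB Ω γ i) : Γ ⊆ Ω := by
  unfold dyadicB at hΓ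
  split_ifs at hΓ
  exacts [hΓ.2, hΓ.1.2]

lemma subset_iUnion_dyadicB {i : ℕ} (hi : 1 ≤ i) {Γ : Set (Torus m)}
    (hΓ : Γ ∈ cubesIn Ω γ (2 ^ i)) : Γ ⊆ ⋃ j ∈ Finset.Icc 1 i, ⋃₀ dyadicB Ω γ j := by
  induction i, hi using Nat.le_induction generalizing Γ with
  | base =>
    have hB : Γ ∈ dyadicB Ω γ 1 := by simpa [dyadicB] using hΓ
    exact (subset_sUnion_of_mem hB).trans (subset_biUnion_of_mem (u := fun j => ⋃₀ dyadicB Ω γ j)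
      (Finset.mem_Icc.mpr ⟨le_rfl, le_rfl⟩))
  | succ n hn ih =>
    by_cases hB : Γ ∈ dyadicB Ω γ (n + 1)
    · exact (subset_sUnion_of_mem hB).trans (subset_biUnion_of_mem
        (u := fun j => ⋃₀ dyadicB Ω γ j) (Finset.mem_Icc.mpr ⟨by omega, le_rfl⟩))
    · obtain ⟨Γ', hΓ', hsub⟩ : ∃ Γ' ∈ cubesIn Ω γ (2 ^ n), Γ ⊆ Γ' := by
        rw [dyadicB, if_neg (by omega)] at hB
        simpa [hΓ] using hB
      refine hsub.trans ((ih hΓ').trans (biUnion_subset_biUnion_left ?_))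
      exact_mod_cast Finset.Icc_subset_Icc le_rfl n.le_succ

lemma diff_iUnion_dyadicB_subset_innerShell {M : ℕ} (hM : 1 ≤ M) {ε : ℝ} (hε : √m / 2 ^ M < ε) :
    Ω \ ⋃ i ∈ Finset.Icc 1 M, ⋃₀ dyadicB Ω γ i ⊆ innerShell Ω ε := by
  rintro x ⟨hxΩ, hxU⟩
  have hk : 0 < 2 ^ M := Nat.two_pow_pos M
  obtain ⟨u, hu⟩ := exists_mem_gridCube (γ := γ) hk x
  obtain ⟨y, hy, hyΩ⟩ := not_subset.mp fun hsub : gridCube γ (2 ^ M) u ⊆ Ω =>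
    hxU (subset_iUnion_dyadicB hM ⟨⟨u, rfl⟩, hsub⟩ hu)
  refine ⟨hxΩ, ?_⟩
  calc torusDistSet x Ωᶜ ≤ torusDist x y := torusDistSet_le_torusDist x hyΩ
    _ ≤ √m / 2 ^ M := by exact_mod_cast torusDist_le_of_mem_gridCube hk hu hy
    _ < ε := hε

end Dyadic

lemma abs_tmeas_sub_le_of_diff_subset {m : ℕ} {U Ω S : Set (Torus m)} (hU : U ⊆ Ω)
    (hS : Ω \ U ⊆ S) : |tmeas U - tmeas Ω| ≤ tmeas S := by
  have h₁ : tmeas U ≤ tmeas Ω := measureReal_mono hU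
  have h₂ : tmeas Ω ≤ tmeas U + tmeas S :=
    (measureReal_mono (sdiff_subset_iff.mp hS)).trans (measureReal_union_le U S)
  rw [abs_sub_comm, abs_of_nonneg (sub_nonneg.mpr h₁)]
  linarith

lemma mul_add_pow_le_of_one_le {m : ℕ} (hm : 1 ≤ m) (C : ℝ) {A s x : ℝ} (hA : 0 ≤ A)
    (hs : 1 ≤ s) (hx : 0 ≤ x) :
    C * (A * (s * x) + (s * x) ^ m) ≤ (max C 0 + 1) * s ^ m * (A * x + x ^ m) := by
  have hsm : s ≤ s ^ m := le_self_pow₀ hs (by omega)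
  calc C * (A * (s * x) + (s * x) ^ m) ≤ (max C 0 + 1) * (A * (s * x) + (s * x) ^ m) := by
        gcongr
        linarith [le_max_left C 0]
    _ ≤ (max C 0 + 1) * (A * (s ^ m * x) + s ^ m * x ^ m) := by
        rw [mul_pow]
        gcongr
    _ = (max C 0 + 1) * s ^ m * (A * x + x ^ m) := by ring

/-- Dyadic cube approximation of a very well shaped set:
`|μ(⋃_{i≤M} ⋃_{Γ ∈ B_i} Γ) − μ(Ω)| ≤ c (μ(Ω)^{(m−1)/m} 2^{−M} + 2^{−Mm})`
with `c = c(m,C)`. -/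
theorem dyadic_approximation_very_well_shaped (m : ℕ) (hm : 1 ≤ m) (C : ℝ) :
    ∃ c : ℝ, 0 < c ∧
      ∀ Ω : Set (Torus m), IsVeryWellShaped Ω C → ∀ γ : Fin m → ℝ, ∀ M : ℕ, 1 ≤ M →
        |tmeas (⋃ i ∈ Finset.Icc 1 M, ⋃₀ dyadicB Ω γ i) - tmeas Ω|
          ≤ c * (tmeas Ω ^ (((m : ℝ) - 1) / (m : ℝ)) * ((2 : ℝ) ^ M)⁻¹
              + ((2 : ℝ) ^ (M * m))⁻¹) := by
  refine ⟨(max C 0 + 1) * (√m + 1) ^ m, by positivity, fun Ω hΩ γ M hM => ?_⟩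
  set x : ℝ := ((2 : ℝ) ^ M)⁻¹
  have hε : √m / 2 ^ M < (√m + 1) * x := by
    rw [div_eq_mul_inv]
    gcongr
    exact lt_add_one _
  have hexp : ((m : ℝ) - 1) / m = 1 - 1 / m := by
    field_simp [show (m : ℝ) ≠ 0 by positivity]
  rw [hexp, pow_mul, ← inv_pow]
  calc _ ≤ tmeas (innerShell Ω ((√m + 1) * x)) :=
        abs_tmeas_sub_le_of_diff_subset
          (iUnion₂_subset fun _ _ => sUnion_subset fun _ => subset_of_mem_dyadicB)
          (diff_iUnion_dyadicB_subset_innerShell hM hε)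
    _ ≤ C * (tmeas Ω ^ (1 - 1 / (m : ℝ)) * ((√m + 1) * x) + ((√m + 1) * x) ^ m) :=
        (hΩ _ (by positivity)).2
    _ ≤ _ := mul_add_pow_le_of_one_le hm C
        (Real.rpow_nonneg ENNReal.toReal_nonneg _) (by simp) (by positivity)
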